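/- Every nonzero skew polynomial P ∈ k[X,σ] is both a right-divisor and a left-divisor of its reduced norm N(P) in k[X,σ]. -/
import Mathlib


/-- A ring `R` together with a ring embedding `ι : k →+* R` and an element `X : R` is
*the* skew polynomial ring `k[X,σ]` if `X * ι a = ι (σ a) * X` for all `a : k` and every
element of `R` can be written uniquely as a finite sum `∑ ι aᵢ * X ^ i`. -/
structure IsSkewPolyRing (k : Type*) [Field k] (σ : k ≃+* k)
    (R : Type*) [Ring R] (ι : k →+* R) (X : R) : Prop where
  X_mul : ∀ a : k, X * ι a = ι (σ a) * X
  repr_unique : ∀ y : R, ∃! c : ℕ →₀ k, y = c.sum fun i a => ι a * X ^ i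

namespace IsSkewPolyRing

variable {k : Type*} [Field k] {σ : k ≃+* k} {R : Type*} [Ring R] {ι : k →+* R} {X : R}

/-- The coefficients of a skew polynomial. -/
noncomputable def repr (h : IsSkewPolyRing k σ R ι X) (y : R) : ℕ →₀ k :=
  (h.repr_unique y).exists.choose

/-- `y` has degree at most `n`. -/
def degLE (h : IsSkewPolyRing k σ R ι X) (y : R) (n : ℕ) : Prop :=
  ∀ i, n < i → h.repr y i = 0

/-- `y` is monic of degree `d`. -/
def MonicOfDegree (h : IsSkewPolyRing k σ R ι X) (y : R) (d : ℕ) : Prop :=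
  h.repr y d = 1 ∧ h.degLE y d

/-- `y` is monic. -/
def Monic (h : IsSkewPolyRing k σ R ι X) (y : R) : Prop := ∃ d, h.MonicOfDegree y d

/-- The matrix of right multiplication by `P` on `k[X,σ]`, viewed as a free module of
rank `r` over `k[X^r]` (identified with `Polynomial k` via `X^r ↦ Y`), in the basis
`1, X, …, X^(r-1)`. -/
noncomputable def normMatrix (h : IsSkewPolyRing k σ R ι X) (r : ℕ) (P : R) :
    Matrix (Fin r) (Fin r) (Polynomial k) :=
  fun l j => ∑ i ∈ (h.repr P).support,
    if (i + (j : ℕ)) % r = (l : ℕ) then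
      Polynomial.monomial ((i + (j : ℕ)) / r) ((σ ^ (j : ℕ)) (h.repr P i))
    else 0

/-- The reduced norm of a skew polynomial `P`: the determinant of right multiplication
by `P` on `k[X,σ]` viewed as a free `k[X^r]`-module of rank `r`, written as a
(commutative) polynomial in the variable `X^r`. -/
noncomputable def norm (h : IsSkewPolyRing k σ R ι X) (r : ℕ) (P : R) : Polynomial k :=
  (h.normMatrix r P).det

end IsSkewPolyRing

/-- The fixed subfield `k^σ` of an automorphism `σ` of `k`. -/
def fixedSubfield {k : Type*} [Field k] (σ : k ≃+* k) : Subfield k where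
  carrier := {a | σ a = a}
  mul_mem' := by intro a b ha hb; simp_all [Set.mem_setOf_eq]
  one_mem' := map_one σ
  add_mem' := by intro a b ha hb; simp_all [Set.mem_setOf_eq]
  zero_mem' := map_zero σ
  neg_mem' := by intro a ha; simp_all [Set.mem_setOf_eq]
  inv_mem' := by intro a ha; simp_all [Set.mem_setOf_eq]

/-- The element of `k[X,σ]` corresponding to a commutative polynomial with
coefficients in the fixed field `k^σ`, via the substitution `Y ↦ X^r`; these are
exactly the elements of `k^σ[X^r]`. -/
noncomputable def centralElt {k : Type*} [Field k] (σ : k ≃+* k)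
    {R : Type*} [Ring R] (ι : k →+* R) (X : R) (r : ℕ)
    (f : Polynomial (fixedSubfield σ)) : R :=
  Polynomial.eval₂ (ι.comp (fixedSubfield σ).subtype) (X ^ r) f


namespace IsSkewPolyRing

variable {k : Type*} [Field k] {σ : k ≃+* k} {R : Type*} [Ring R] {ι : k →+* R} {X : R}

theorem repr_spec (h : IsSkewPolyRing k σ R ι X) (y : R) :
    y = (h.repr y).sum fun i a => ι a * X ^ i := (h.repr_unique y).exists.choose_spec

theorem repr_eq (h : IsSkewPolyRing k σ R ι X) {y : R} {c : ℕ →₀ k}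
    (hy : y = c.sum fun i a => ι a * X ^ i) : h.repr y = c :=
  (h.repr_unique y).unique (h.repr_spec y) hy

theorem repr_zero (h : IsSkewPolyRing k σ R ι X) : h.repr (0 : R) = 0 :=
  (h.repr_eq (by simp))

theorem ne_zero_of_repr (h : IsSkewPolyRing k σ R ι X) {y : R} {c : ℕ →₀ k}
    (hy : y = c.sum fun i a => ι a * X ^ i) (hc : c ≠ 0) : y ≠ 0 := by
  rintro rfl
  exact hc ((h.repr_eq hy).symm.trans h.repr_zero)

theorem pow_X_mul (h : IsSkewPolyRing k σ R ι X) (n : ℕ) (a : k) :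
    X ^ n * ι a = ι ((σ ^ n) a) * X ^ n := by
  induction n generalizing a with
  | zero => simp only [pow_zero, one_mul, mul_one]; rfl
  | succ n ih =>
    have e : (σ ^ (n + 1)) a = (σ ^ n) (σ a) := by rw [pow_succ]; rfl
    rw [pow_succ, mul_assoc, h.X_mul, ← mul_assoc, ih, mul_assoc, ← pow_succ, e]

end IsSkewPolyRing

namespace IsSkewPolyRing

variable {k : Type*} [Field k] {σ : k ≃+* k} {R : Type*} [Ring R] {ι : k →+* R} {X : R}

theorem repr_ne_zero (h : IsSkewPolyRing k σ R ι X) {y : R} (hy : y ≠ 0) : h.repr y ≠ 0 := by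
  intro h0
  exact hy (by rw [h.repr_spec y, h0, Finsupp.sum_zero_index])

/-- The evaluation of a coefficient finsupp, as an additive hom. -/
noncomputable def eltOf (ι : k →+* R) (X : R) : (ℕ →₀ k) →+ R :=
  Finsupp.liftAddHom fun i => (AddMonoidHom.mulRight (X ^ i)).comp ι.toAddMonoidHom

theorem eltOf_apply (c : ℕ →₀ k) : eltOf ι X c = c.sum fun i a => ι a * X ^ i := rfl

theorem eltOf_single (i : ℕ) (a : k) : eltOf ι X (Finsupp.single i a) = ι a * X ^ i :=
  Finsupp.liftAddHom_apply_single _ _ _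

theorem single_term_mul (h : IsSkewPolyRing k σ R ι X) (i j : ℕ) (a b : k) :
    (ι a * X ^ i) * (ι b * X ^ j) = ι (a * (σ ^ i) b) * X ^ (i + j) := by
  rw [mul_assoc, ← mul_assoc (X ^ i), h.pow_X_mul, mul_assoc, ← pow_add, ← mul_assoc, ← map_mul]

theorem mul_eq_conv (h : IsSkewPolyRing k σ R ι X) (y z : R) :
    y * z = eltOf ι X (∑ i ∈ (h.repr y).support, ∑ j ∈ (h.repr z).support,
      Finsupp.single (i + j) (h.repr y i * (σ ^ i) (h.repr z j))) := by
  conv_lhs => rw [h.repr_spec y, h.repr_spec z]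
  rw [Finsupp.sum, Finsupp.sum, Finset.sum_mul_sum, map_sum]
  refine Finset.sum_congr rfl fun i _ => ?_
  rw [map_sum]
  refine Finset.sum_congr rfl fun j _ => ?_
  rw [eltOf_single, h.single_term_mul]

theorem mul_ne_zero' (h : IsSkewPolyRing k σ R ι X) {y z : R} (hy : y ≠ 0) (hz : z ≠ 0) :
    y * z ≠ 0 := by
  have ha := h.repr_ne_zero hy
  have hb := h.repr_ne_zero hz
  set a := h.repr y with ha'
  set b := h.repr z with hb'
  have hsa : a.support.Nonempty := Finsupp.support_nonempty_iff.mpr ha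
  have hsb : b.support.Nonempty := Finsupp.support_nonempty_iff.mpr hb
  set m := a.support.max' hsa with hm'
  set n := b.support.max' hsb with hn'
  have hma : m ∈ a.support := a.support.max'_mem hsa
  have hnb : n ∈ b.support := b.support.max'_mem hsb
  set c : ℕ →₀ k := ∑ i ∈ a.support, ∑ j ∈ b.support,
      Finsupp.single (i + j) (a i * (σ ^ i) (b j)) with hc'
  have hyz : y * z = c.sum fun i a => ι a * X ^ i := h.mul_eq_conv y z
  have hcmn : c (m + n) = a m * (σ ^ m) (b n) := by
    rw [hc', Finsupp.finset_sum_apply]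
    rw [Finset.sum_eq_single_of_mem m hma]
    · rw [Finsupp.finset_sum_apply, Finset.sum_eq_single_of_mem n hnb]
      · rw [Finsupp.single_eq_same]
      · intro j hj hjn
        have : j < n := lt_of_le_of_ne (b.support.le_max' j hj) hjn
        exact Finsupp.single_eq_of_ne (by omega)
    · intro i hi him
      have : i < m := lt_of_le_of_ne (a.support.le_max' i hi) him
      rw [Finsupp.finset_sum_apply]
      refine Finset.sum_eq_zero fun j hj => ?_
      have : j ≤ n := b.support.le_max' j hj
      exact Finsupp.single_eq_of_ne (by omega)
  have hne : c (m + n) ≠ 0 := by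
    rw [hcmn]
    exact mul_ne_zero (Finsupp.mem_support_iff.mp hma)
      ((map_ne_zero_iff _ (RingEquiv.injective _)).mpr (Finsupp.mem_support_iff.mp hnb))
  exact h.ne_zero_of_repr hyz (fun h0 => hne (by rw [h0]; rfl))

end IsSkewPolyRing

namespace IsSkewPolyRing

variable {k : Type*} [Field k] {σ : k ≃+* k} {R : Type*} [Ring R] {ι : k →+* R} {X : R}

section

variable {r : ℕ}

theorem comm_pow_r (h : IsSkewPolyRing k σ R ι X) (hr : σ ^ r = 1) (a : k) : Commute (ι a) (X ^ r) := by
  have := h.pow_X_mul r a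
  rw [hr] at this
  exact (this.trans (by rfl)).symm

/-- `eval₂` at `X ^ r` as a ring hom. -/
noncomputable def phi (h : IsSkewPolyRing k σ R ι X) (hr : σ ^ r = 1) : Polynomial k →+* R :=
  Polynomial.eval₂RingHom' ι (X ^ r) (h.comm_pow_r hr)

theorem phi_apply (h : IsSkewPolyRing k σ R ι X) (hr : σ ^ r = 1) (f : Polynomial k) : h.phi hr f = Polynomial.eval₂ ι (X ^ r) f := rfl

theorem phi_monomial (h : IsSkewPolyRing k σ R ι X) (hr : σ ^ r = 1) (q : ℕ) (c : k) :
    h.phi hr (Polynomial.monomial q c) = ι c * (X ^ r) ^ q := by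
  rw [phi_apply, Polynomial.eval₂_monomial]

theorem pow_mul_eq (h : IsSkewPolyRing k σ R ι X) (hr : σ ^ r = 1) (hr0 : 0 < r) (P : R) (j : Fin r) :
    X ^ (j : ℕ) * P = ∑ l : Fin r, h.phi hr (h.normMatrix r P l j) * X ^ (l : ℕ) := by
  conv_lhs => rw [h.repr_spec P]
  rw [Finsupp.sum, Finset.mul_sum]
  rw [show (∑ l : Fin r, h.phi hr (h.normMatrix r P l j) * X ^ (l : ℕ)) =
      ∑ l : Fin r, ∑ i ∈ (h.repr P).support,
        (h.phi hr (if (i + (j : ℕ)) % r = (l : ℕ) then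
          Polynomial.monomial ((i + (j : ℕ)) / r) ((σ ^ (j : ℕ)) (h.repr P i))
        else 0)) * X ^ (l : ℕ) from by
    refine Finset.sum_congr rfl fun l _ => ?_
    rw [normMatrix, map_sum, Finset.sum_mul]]
  rw [Finset.sum_comm]
  refine Finset.sum_congr rfl fun i _ => ?_
  have hl0 : ((i + (j : ℕ)) % r) < r := Nat.mod_lt _ hr0
  have key : ∀ l : Fin r, ((i + (j : ℕ)) % r = (l : ℕ)) = ((⟨_, hl0⟩ : Fin r) = l) := by
    intro l; rw [Fin.ext_iff]
  simp_rw [key, apply_ite (h.phi hr), map_zero, ite_mul, zero_mul]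
  rw [Finset.sum_ite_eq, if_pos (Finset.mem_univ _)]
  rw [phi_monomial, ← pow_mul, mul_assoc, ← pow_add]
  rw [← mul_assoc, h.pow_X_mul, mul_assoc, ← pow_add]
  congr 2
  have := Nat.div_add_mod (i + (j : ℕ)) r
  simp only [Fin.val_mk]
  omega

theorem norm_eq_mul (h : IsSkewPolyRing k σ R ι X) (hr : σ ^ r = 1) (hr0 : 0 < r) (P : R) :
    h.phi hr (h.norm r P) =
      (∑ j : Fin r, h.phi hr ((h.normMatrix r P).adjugate j ⟨0, hr0⟩) * X ^ (j : ℕ)) * P := by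
  set M := h.normMatrix r P with hM
  set z : Fin r := ⟨0, hr0⟩ with hz
  rw [Finset.sum_mul]
  symm
  calc (∑ j : Fin r, h.phi hr (M.adjugate j z) * X ^ (j : ℕ) * P)
      = ∑ j : Fin r, ∑ l : Fin r, h.phi hr (M l j * M.adjugate j z) * X ^ (l : ℕ) := by
        refine Finset.sum_congr rfl fun j _ => ?_
        rw [mul_assoc, h.pow_mul_eq hr hr0 P j, Finset.mul_sum]
        refine Finset.sum_congr rfl fun l _ => ?_
        rw [← mul_assoc, ← map_mul, mul_comm (M.adjugate j z)]
    _ = ∑ l : Fin r, h.phi hr ((M * M.adjugate) l z) * X ^ (l : ℕ) := by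
        rw [Finset.sum_comm]
        refine Finset.sum_congr rfl fun l _ => ?_
        rw [Matrix.mul_apply, map_sum, Finset.sum_mul]
    _ = h.phi hr M.det := by
        rw [Matrix.mul_adjugate]
        simp_rw [Matrix.smul_apply, Matrix.one_apply, smul_eq_mul, mul_ite, mul_one, mul_zero,
          apply_ite (h.phi hr), map_zero, ite_mul, zero_mul]
        rw [Finset.sum_ite_eq', if_pos (Finset.mem_univ _), hz]
        simp
    _ = h.phi hr (h.norm r P) := rfl

end

end IsSkewPolyRing

theorem succ_mod_div (r n : ℕ) (hr0 : 0 < r) :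
    ((n + 1) % r = 0 ∧ n % r = r - 1 ∧ (n + 1) / r = n / r + 1) ∨
    (n % r ≠ r - 1 ∧ (n + 1) % r = n % r + 1 ∧ (n + 1) / r = n / r) := by
  rcases eq_or_ne (n % r) (r - 1) with he | he
  · left
    have h1 : n + 1 = r * (n / r + 1) := by
      have := Nat.div_add_mod n r
      have h2 := Nat.mod_lt n hr0
      rw [Nat.mul_succ]
      omega
    refine ⟨?_, he, ?_⟩
    · rw [h1, Nat.mul_mod_right]
    · rw [h1, Nat.mul_div_cancel_left _ hr0]
  · right
    have hmlt := Nat.mod_lt n hr0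
    have hm : n % r + 1 < r := by omega
    have h1 : n + 1 = r * (n / r) + (n % r + 1) := by
      have := Nat.div_add_mod n r
      omega
    refine ⟨he, ?_, ?_⟩
    · rw [h1, Nat.mul_add_mod, Nat.mod_eq_of_lt hm]
    · rw [h1, Nat.mul_add_div hr0, Nat.div_eq_of_lt hm, add_zero]

theorem pred_mod (r l : ℕ) (hr0 : 0 < r) (hl : l < r) :
    (l + (r - 1)) % r = if l = 0 then r - 1 else l - 1 := by
  rcases eq_or_ne l 0 with h0 | h0
  · rw [h0, if_pos rfl, zero_add, Nat.mod_eq_of_lt (by omega)]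
  · rw [if_neg h0]
    have : l + (r - 1) = (l - 1) + r := by omega
    rw [this, Nat.add_mod_right, Nat.mod_eq_of_lt (by omega)]

/-- The matrix of left multiplication by `X` in the basis `1, X, …, X^(r-1)`. -/
noncomputable def cycMatrix (k : Type*) [Field k] (r : ℕ) :
    Matrix (Fin r) (Fin r) (Polynomial k) :=
  fun l m => if (l : ℕ) = ((m : ℕ) + 1) % r then
    (if (m : ℕ) = r - 1 then Polynomial.X else 1) else 0

namespace IsSkewPolyRing

variable {k : Type*} [Field k] {σ : k ≃+* k}

theorem key_term {r : ℕ} (hr : σ ^ r = 1) (i j l : ℕ) (hr0 : 0 < r) (hj : j < r)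
    (hl : l < r) (a : k) :
    (if (l + (r - 1)) % r = r - 1 then Polynomial.X else 1) *
      ((if (i + j) % r = (l + (r - 1)) % r then
          Polynomial.monomial ((i + j) / r) ((σ ^ j) a) else (0 : Polynomial k)).map
            (σ : k →+* k))
    = (if (i + (j + 1) % r) % r = l then
          Polynomial.monomial ((i + (j + 1) % r) / r) ((σ ^ ((j + 1) % r)) a) else 0) *
      (if j = r - 1 then Polynomial.X else 1) := by
  have hpm := pred_mod r l hr0 hl
  have H := succ_mod_div r (i + j) hr0
  have hcoef : (σ : k →+* k) ((σ ^ j) a) = (σ ^ (j + 1)) a := by rw [pow_succ']; rfl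
  rcases eq_or_ne j (r - 1) with hj1 | hj1
  · -- j = r - 1
    have hj1' : (j + 1) % r = 0 := by
      rw [hj1, (by omega : r - 1 + 1 = r), Nat.mod_self]
    rw [if_pos hj1, hj1']
    simp only [add_zero]
    have hco : (σ ^ (0 : ℕ)) a = a := by rw [pow_zero]; rfl
    rw [hco]
    have hij : i + j + 1 = i + r := by omega
    rw [hij] at H
    have h2 : (i + r) % r = i % r := Nat.add_mod_right i r
    have h3 : (i + r) / r = i / r + 1 := Nat.add_div_right i hr0
    have hilt := Nat.mod_lt i hr0
    have hval : (σ : k →+* k) ((σ ^ j) a) = a := by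
      rw [hcoef, hj1, (by omega : r - 1 + 1 = r), hr]; rfl
    rcases eq_or_ne l 0 with h0 | h0
    · have hpm' : (l + (r - 1)) % r = r - 1 := by rw [hpm, if_pos h0]
      rw [if_pos hpm']
      by_cases hc : (i + j) % r = (l + (r - 1)) % r
      · rw [hpm'] at hc
        rw [if_pos (by rw [hpm']; exact hc),
          if_pos (show i % r = l by rcases H with ⟨H1,H2,H3⟩|⟨H1,H2,H3⟩ <;> omega),
          Polynomial.map_monomial, hval, Polynomial.X_mul_monomial,
          Polynomial.monomial_mul_X,
          show (i + j) / r + 1 = i / r + 1 from by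
            rcases H with ⟨H1,H2,H3⟩|⟨H1,H2,H3⟩ <;> omega]
      · rw [hpm'] at hc
        rw [if_neg (by rw [hpm']; exact hc),
          if_neg (show ¬ i % r = l by rcases H with ⟨H1,H2,H3⟩|⟨H1,H2,H3⟩ <;> omega)]
        simp
    · have hpm' : (l + (r - 1)) % r = l - 1 := by rw [hpm, if_neg h0]
      rw [if_neg (by rw [hpm']; omega), one_mul]
      by_cases hc : (i + j) % r = (l + (r - 1)) % r
      · rw [hpm'] at hc
        rw [if_pos (by rw [hpm']; exact hc),
          if_pos (show i % r = l by rcases H with ⟨H1,H2,H3⟩|⟨H1,H2,H3⟩ <;> omega),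
          Polynomial.map_monomial, hval, Polynomial.monomial_mul_X,
          show (i + j) / r = i / r + 1 from by
            rcases H with ⟨H1,H2,H3⟩|⟨H1,H2,H3⟩ <;> omega]
      · rw [hpm'] at hc
        rw [if_neg (by rw [hpm']; exact hc),
          if_neg (show ¬ i % r = l by rcases H with ⟨H1,H2,H3⟩|⟨H1,H2,H3⟩ <;> omega)]
        simp
  · -- j ≠ r - 1
    have hj1' : (j + 1) % r = j + 1 := Nat.mod_eq_of_lt (by omega)
    rw [if_neg hj1, mul_one, hj1']
    have hjj : i + (j + 1) = i + j + 1 := by omega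
    rw [hjj]
    rcases eq_or_ne l 0 with h0 | h0
    · have hpm' : (l + (r - 1)) % r = r - 1 := by rw [hpm, if_pos h0]
      rw [if_pos hpm']
      by_cases hc : (i + j) % r = (l + (r - 1)) % r
      · rw [hpm'] at hc
        rw [if_pos (by rw [hpm']; exact hc),
          if_pos (show (i + j + 1) % r = l by rcases H with ⟨H1,H2,H3⟩|⟨H1,H2,H3⟩ <;> omega),
          Polynomial.map_monomial, hcoef, Polynomial.X_mul_monomial,
          show (i + j) / r + 1 = (i + j + 1) / r from by
            rcases H with ⟨H1,H2,H3⟩|⟨H1,H2,H3⟩ <;> omega]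
      · rw [hpm'] at hc
        rw [if_neg (by rw [hpm']; exact hc),
          if_neg (show ¬ (i + j + 1) % r = l by rcases H with ⟨H1,H2,H3⟩|⟨H1,H2,H3⟩ <;> omega)]
        simp
    · have hpm' : (l + (r - 1)) % r = l - 1 := by rw [hpm, if_neg h0]
      rw [if_neg (by rw [hpm']; omega), one_mul]
      by_cases hc : (i + j) % r = (l + (r - 1)) % r
      · rw [hpm'] at hc
        rw [if_pos (by rw [hpm']; exact hc),
          if_pos (show (i + j + 1) % r = l by rcases H with ⟨H1,H2,H3⟩|⟨H1,H2,H3⟩ <;> omega),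
          Polynomial.map_monomial, hcoef,
          show (i + j) / r = (i + j + 1) / r from by
            rcases H with ⟨H1,H2,H3⟩|⟨H1,H2,H3⟩ <;> omega]
      · rw [hpm'] at hc
        rw [if_neg (by rw [hpm']; exact hc),
          if_neg (show ¬ (i + j + 1) % r = l by rcases H with ⟨H1,H2,H3⟩|⟨H1,H2,H3⟩ <;> omega)]
        simp

end IsSkewPolyRing

theorem cyc_cond_iff (r : ℕ) (hr0 : 0 < r) (l m : Fin r) :
    ((l : ℕ) = ((m : ℕ) + 1) % r) ↔
      m = (⟨((l : ℕ) + (r - 1)) % r, Nat.mod_lt _ hr0⟩ : Fin r) := by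
  rw [Fin.ext_iff]
  simp only [Fin.val_mk]
  have hm : (m : ℕ) % r = (m : ℕ) := Nat.mod_eq_of_lt m.isLt
  have H := succ_mod_div r (m : ℕ) hr0
  have hp := pred_mod r (l : ℕ) hr0 l.isLt
  have hlt := l.isLt
  have hmlt := m.isLt
  split_ifs at hp <;> (rcases H with ⟨H1, H2, H3⟩ | ⟨H1, H2, H3⟩ <;> omega)

theorem cycMatrix_det_ne_zero (k : Type*) [Field k] (r : ℕ) (hr0 : 0 < r) :
    (cycMatrix k r).det ≠ 0 := by
  intro h0
  have hz := RingHom.map_det (Polynomial.evalRingHom (1 : k)) (cycMatrix k r)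
  rw [h0, map_zero] at hz
  rw [RingHom.mapMatrix_apply] at hz
  set C1 := (cycMatrix k r).map (Polynomial.evalRingHom (1 : k)) with hC1
  have hent : ∀ l m : Fin r, C1 l m = if (l : ℕ) = ((m : ℕ) + 1) % r then 1 else 0 := by
    intro l m
    rw [hC1, Matrix.map_apply, cycMatrix]
    split_ifs <;> simp
  have hmul : C1 * C1.transpose = 1 := by
    apply Matrix.ext
    intro l l'
    rw [Matrix.mul_apply, Matrix.one_apply]
    simp only [Matrix.transpose_apply, hent, cyc_cond_iff r hr0 l, cyc_cond_iff r hr0 l',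
      ite_mul, zero_mul, one_mul]
    rw [Finset.sum_ite_eq', if_pos (Finset.mem_univ _)]
    have hA : ((⟨((l : ℕ) + (r - 1)) % r, Nat.mod_lt _ hr0⟩ : Fin r)
        = ⟨((l' : ℕ) + (r - 1)) % r, Nat.mod_lt _ hr0⟩) ↔ l = l' := by
      rw [Fin.ext_iff, Fin.ext_iff]
      simp only [Fin.val_mk]
      have h1 := pred_mod r l hr0 l.isLt
      have h2 := pred_mod r l' hr0 l'.isLt
      have := l.isLt
      have := l'.isLt
      constructor
      · intro hE
        split_ifs at h1 h2 <;> omega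
      · intro hE
        rw [hE]
    by_cases hll : l = l'
    · rw [if_pos (hA.mpr hll), if_pos hll]
    · rw [if_neg (fun hAB => hll (hA.mp hAB)), if_neg hll]
  have hd := congrArg Matrix.det hmul
  rw [Matrix.det_mul, Matrix.det_transpose, Matrix.det_one, ← hz] at hd
  simp at hd

namespace IsSkewPolyRing

variable {k : Type*} [Field k] {σ : k ≃+* k} {R : Type*} [Ring R] {ι : k →+* R} {X : R}

theorem cyc_conj (h : IsSkewPolyRing k σ R ι X) {r : ℕ} (hr : σ ^ r = 1) (hr0 : 0 < r)
    (P : R) :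
    cycMatrix k r * (h.normMatrix r P).map (Polynomial.mapRingHom (σ : k →+* k))
      = h.normMatrix r P * cycMatrix k r := by
  apply Matrix.ext
  intro l j
  rw [Matrix.mul_apply, Matrix.mul_apply]
  have hj1 : ((⟨((j : ℕ) + 1) % r, Nat.mod_lt _ hr0⟩ : Fin r) : ℕ) = ((j : ℕ) + 1) % r := rfl
  have hiff2 : ∀ m : Fin r, ((m : ℕ) = ((j : ℕ) + 1) % r) ↔
      m = (⟨((j : ℕ) + 1) % r, Nat.mod_lt _ hr0⟩ : Fin r) := by
    intro m; rw [Fin.ext_iff]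
  calc ∑ m, cycMatrix k r l m *
        ((h.normMatrix r P).map (Polynomial.mapRingHom (σ : k →+* k))) m j
      = ∑ m, (if m = (⟨((l : ℕ) + (r - 1)) % r, Nat.mod_lt _ hr0⟩ : Fin r) then
          (if (m : ℕ) = r - 1 then Polynomial.X else 1) *
            ((h.normMatrix r P).map (Polynomial.mapRingHom (σ : k →+* k))) m j else 0) := by
        refine Finset.sum_congr rfl fun m _ => ?_
        rw [cycMatrix]
        simp only [cyc_cond_iff r hr0 l, ite_mul, zero_mul]
    _ = (if (((l : ℕ) + (r - 1)) % r) = r - 1 then Polynomial.X else 1) *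
          ((h.normMatrix r P).map (Polynomial.mapRingHom (σ : k →+* k)))
            ⟨((l : ℕ) + (r - 1)) % r, Nat.mod_lt _ hr0⟩ j := by
        rw [Finset.sum_ite_eq', if_pos (Finset.mem_univ _)]
    _ = (h.normMatrix r P) l ⟨((j : ℕ) + 1) % r, Nat.mod_lt _ hr0⟩ *
          (if (j : ℕ) = r - 1 then Polynomial.X else 1) := by
        rw [Matrix.map_apply]
        simp only [normMatrix, Fin.val_mk]
        rw [map_sum, Finset.mul_sum, Finset.sum_mul]
        refine Finset.sum_congr rfl fun i _ => ?_
        simp only [Polynomial.coe_mapRingHom]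
        exact key_term hr i (j : ℕ) (l : ℕ) hr0 j.isLt l.isLt (h.repr P i)
    _ = ∑ m, h.normMatrix r P l m * cycMatrix k r m j := by
        have e : (∑ m, h.normMatrix r P l m * cycMatrix k r m j) =
            ∑ m, (if m = (⟨((j : ℕ) + 1) % r, Nat.mod_lt _ hr0⟩ : Fin r) then
              h.normMatrix r P l m * (if (j : ℕ) = r - 1 then Polynomial.X else 1) else 0) := by
          refine Finset.sum_congr rfl fun m _ => ?_
          rw [cycMatrix]
          simp only [hiff2, mul_ite, mul_zero]
        rw [e, Finset.sum_ite_eq', if_pos (Finset.mem_univ _)]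

end IsSkewPolyRing

namespace IsSkewPolyRing

variable {k : Type*} [Field k] {σ : k ≃+* k} {R : Type*} [Ring R] {ι : k →+* R} {X : R}

theorem norm_map_eq (h : IsSkewPolyRing k σ R ι X) {r : ℕ} (hr : σ ^ r = 1) (hr0 : 0 < r)
    (P : R) : (h.norm r P).map (σ : k →+* k) = h.norm r P := by
  have hd := congrArg Matrix.det (h.cyc_conj hr hr0 P)
  rw [Matrix.det_mul, Matrix.det_mul, ← RingHom.mapMatrix_apply, ← RingHom.map_det] at hd
  have hcancel := mul_left_cancel₀ (cycMatrix_det_ne_zero k r hr0)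
    (hd.trans (mul_comm _ _))
  show (Polynomial.mapRingHom (σ : k →+* k)) (h.norm r P) = h.norm r P
  exact hcancel

theorem phi_comm_base (h : IsSkewPolyRing k σ R ι X) {r : ℕ} (hr : σ ^ r = 1)
    (f : Polynomial k) (a : k) : Commute (ι a) (h.phi hr f) := by
  induction f using Polynomial.induction_on' with
  | add p q hp hq => rw [map_add]; exact hp.add_right hq
  | monomial n c =>
    rw [phi_monomial]
    have h1 : Commute (ι a) (ι c) := by
      show ι a * ι c = ι c * ι a
      rw [← map_mul, ← map_mul, mul_comm]
    exact h1.mul_right ((h.comm_pow_r hr a).pow_right n)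

theorem X_phi (h : IsSkewPolyRing k σ R ι X) {r : ℕ} (hr : σ ^ r = 1) (f : Polynomial k) :
    X * h.phi hr f = h.phi hr (f.map (σ : k →+* k)) * X := by
  induction f using Polynomial.induction_on' with
  | add p q hp hq => rw [map_add, mul_add, hp, hq, Polynomial.map_add, map_add, add_mul]
  | monomial n c =>
    rw [phi_monomial, Polynomial.map_monomial, phi_monomial, ← mul_assoc, h.X_mul,
      mul_assoc, mul_assoc]
    congr 1
    rw [← pow_mul, ← pow_succ', ← pow_succ]

theorem phi_commute (h : IsSkewPolyRing k σ R ι X) {r : ℕ} (hr : σ ^ r = 1)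
    {f : Polynomial k} (hf : f.map (σ : k →+* k) = f) (y : R) :
    Commute (h.phi hr f) y := by
  have hX : Commute X (h.phi hr f) := by
    show X * h.phi hr f = h.phi hr f * X
    rw [h.X_phi hr f, hf]
  rw [h.repr_spec y, Finsupp.sum]
  refine Commute.sum_right _ _ _ fun i _ => ?_
  exact ((h.phi_comm_base hr f _).symm).mul_right (hX.symm.pow_right i)

end IsSkewPolyRing


/-- Every nonzero skew polynomial `P ∈ k[X,σ]` is both a right-divisor and a
left-divisor of its reduced norm `N(P)` (viewed as an element of `k[X,σ]` via
the substitution `Y ↦ X^r`). -/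
theorem skewPoly_dvd_norm {k R : Type*} [Field k] [Fintype k] [Ring R]
    (σ : k ≃+* k) (r : ℕ) (hr : orderOf σ = r) (ι : k →+* R) (X : R)
    (h : IsSkewPolyRing k σ R ι X) (P : R) (hP : P ≠ 0) :
    (∃ u : R, Polynomial.eval₂ ι (X ^ r) (h.norm r P) = u * P) ∧
    (∃ v : R, Polynomial.eval₂ ι (X ^ r) (h.norm r P) = P * v) := by
  have hfin : Finite (k ≃+* k) :=
    Finite.of_injective (fun e => (e : k → k)) DFunLike.coe_injective
  have hr0 : 0 < r := hr ▸ orderOf_pos σ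
  have hrs : σ ^ r = 1 := hr ▸ pow_orderOf_eq_one σ
  set u := ∑ j : Fin r, h.phi hrs ((h.normMatrix r P).adjugate j ⟨0, hr0⟩) * X ^ (j : ℕ)
    with hu
  have key : h.phi hrs (h.norm r P) = u * P := h.norm_eq_mul hrs hr0 P
  have hgoal : Polynomial.eval₂ ι (X ^ r) (h.norm r P) = h.phi hrs (h.norm r P) := rfl
  constructor
  · exact ⟨u, by rw [hgoal, key]⟩
  · refine ⟨u, ?_⟩
    have hcom : Commute (h.phi hrs (h.norm r P)) P :=
      h.phi_commute hrs (h.norm_map_eq hrs hr0 P) P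
    have h1 : (u * P) * P = P * (u * P) := by rw [← key]; exact hcom
    have hz : (P * u - u * P) * P = 0 := by
      rw [sub_mul, mul_assoc, ← h1, sub_self]
    rcases eq_or_ne (P * u - u * P) 0 with hw | hw
    · have h2 : P * u = u * P := sub_eq_zero.mp hw
      rw [hgoal, key, ← h2]
    · exact absurd hz (h.mul_ne_zero' hw hP)
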